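/- Suppose the càdlàg path S : [0,T] → ℝ^d satisfies Property (RIE) with respect to p ∈ (2,3) and the nested partitions (P^n)_{n∈ℕ}. Define A : Δ_{[0,T]} → ℝ^{d×d} by A_{s,t} := ∫ₛᵗ S_u ⊗ dS_u − S_s ⊗ S_{s,t}, where ∫ₛᵗ S_u ⊗ dS_u := ∫₀ᵗ S_u ⊗ dS_u − ∫₀ˢ S_u ⊗ dS_u. Then the triplet S = (S,S,A) is a càdlàg p-rough path: A satisfies Chen's relation A_{s,t} = A_{s,u} + A_{u,t} + S_{s,u} ⊗ S_{u,t}, A is càdlàg in each variable, and ‖A‖_{p/2,[0,T]} ≤ C w(0,T)^{2/p} < ∞ for a constant C depending only on p, where w is the control function from condition (c) of Property (RIE). -/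

import Mathlib

open Set Filter MeasureTheory
open scoped Topology InnerProductSpace BigOperators

noncomputable section

/-- `ℝ^d` with the Euclidean norm. -/
abbrev Vec (d : ℕ) := EuclideanSpace ℝ (Fin d)

/-- `ℝ^{d×d}` with the Euclidean (Frobenius) norm. -/
abbrev Mat (d : ℕ) := EuclideanSpace ℝ (Fin d × Fin d)

def mkVec {d : ℕ} (f : Fin d → ℝ) : Vec d := (WithLp.equiv 2 (Fin d → ℝ)).symm f

def mkMat {d : ℕ} (f : Fin d × Fin d → ℝ) : Mat d := (WithLp.equiv 2 (Fin d × Fin d → ℝ)).symm f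

/-- The tensor product `a ⊗ b` of two vectors, as a `d × d` matrix. -/
def tensor {d : ℕ} (a b : Vec d) : Mat d := mkMat (fun ij => a ij.1 * b ij.2)

/-- A matrix (an element of `L(ℝ^d, ℝ^d)`) applied to a vector. -/
def matApply {d : ℕ} (M : Mat d) (v : Vec d) : Vec d := mkVec (fun i => ∑ j, M (i, j) * v j)

/-- The matrix with `(i,j)` entry `Σ_k A_{ki} B_{kj}`, i.e. `AᵀB`. -/
def matTProd {d : ℕ} (A B : Mat d) : Mat d := mkMat (fun ij => ∑ k, A (k, ij.1) * B (k, ij.2))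

/-- The identity matrix. -/
def idMat {d : ℕ} : Mat d := mkMat (fun ij => if ij.1 = ij.2 then (1 : ℝ) else 0)

/-- The contraction `F' G' 𝕏 := Σ_{k,i,j} F'_{ki} G'_{kj} 𝕏_{ij}`. -/
def ddContract {d : ℕ} (A B X : Mat d) : ℝ := ∑ k, ∑ i, ∑ j, A (k, i) * B (k, j) * X (i, j)

/-- The increment process `(s,t) ↦ X_t - X_s` of a path. -/
def inc {E : Type*} [AddCommGroup E] (X : ℝ → E) : ℝ → ℝ → E := fun s t => X t - X s

/-- A (finite) partition `s = τ_0 < τ_1 < ⋯ < τ_N = t` of the interval `[s,t]`. -/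
structure IntervalPartition (s t : ℝ) where
  N : ℕ
  τ : ℕ → ℝ
  Npos : 0 < N
  first : τ 0 = s
  last : τ N = t
  mono : ∀ k < N, τ k < τ (k + 1)

/-- The mesh of the partition is `< δ`. -/
def IntervalPartition.MeshLt {s t : ℝ} (P : IntervalPartition s t) (δ : ℝ) : Prop :=
  ∀ k < P.N, P.τ (k + 1) - P.τ k < δ

/-- The sum `Σ_{[u,v] ∈ P} |A_{u,v}|^p` along a partition `P`, for a two-parameter
function `A`. -/
def varSumOn {E : Type*} [NormedAddCommGroup E] (p : ℝ) (A : ℝ → ℝ → E)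
    {s t : ℝ} (P : IntervalPartition s t) : ℝ :=
  ∑ k ∈ Finset.range P.N, ‖A (P.τ k) (P.τ (k + 1))‖ ^ p

/-- The set of all sums `Σ_{[u,v] ∈ P} |A_{u,v}|^p` over partitions `P` of `[s,t]`. -/
def pVarSums {E : Type*} [NormedAddCommGroup E] (p : ℝ) (A : ℝ → ℝ → E) (s t : ℝ) : Set ℝ :=
  {x | ∃ P : IntervalPartition s t, x = varSumOn p A P}

/-- The `p`-variation `‖A‖_{p,[s,t]} := (sup_P Σ_{[u,v] ∈ P} |A_{u,v}|^p)^{1/p}` of a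
two-parameter function `A` (for a path `X`, apply this to `inc X`). -/
def pVar {E : Type*} [NormedAddCommGroup E] (p : ℝ) (A : ℝ → ℝ → E) (s t : ℝ) : ℝ :=
  sSup (pVarSums p A s t) ^ (1 / p)

/-- `A` has finite `p`-variation on `[s,t]`. -/
def HasBddPVar {E : Type*} [NormedAddCommGroup E] (p : ℝ) (A : ℝ → ℝ → E) (s t : ℝ) : Prop :=
  BddAbove (pVarSums p A s t)

/-- `f` is càdlàg on `[a,b]`: right-continuous on `[a,b)` with left limits on `(a,b]`. -/
def CadlagOn {E : Type*} [TopologicalSpace E] (f : ℝ → E) (a b : ℝ) : Prop :=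
  (∀ t ∈ Ico a b, Tendsto f (𝓝[>] t) (𝓝 (f t))) ∧
  (∀ t ∈ Ioc a b, ∃ l, Tendsto f (𝓝[<] t) (𝓝 l))

/-- The supremum norm of `f` on `[a,b]`. -/
def supNormOn {E : Type*} [NormedAddCommGroup E] (f : ℝ → E) (a b : ℝ) : ℝ :=
  sSup ((fun u => ‖f u‖) '' Icc a b)

/-- A control function on `Δ_{[0,T]}`: nonnegative and superadditive. -/
def IsControl (T : ℝ) (w : ℝ → ℝ → ℝ) : Prop :=
  (∀ ⦃s t : ℝ⦄, 0 ≤ s → s ≤ t → t ≤ T → 0 ≤ w s t) ∧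
  (∀ ⦃s u t : ℝ⦄, 0 ≤ s → s ≤ u → u ≤ t → t ≤ T → w s u + w u t ≤ w s t)

/-- The set of jump times of `f` in `(0,T]`. -/
def jumpSet {E : Type*} [TopologicalSpace E] (f : ℝ → E) (T : ℝ) : Set ℝ :=
  {u | u ∈ Ioc (0 : ℝ) T ∧ Function.leftLim f u ≠ f u}

/-- A càdlàg `p`-rough path `(X, Z, 𝕏)` over `ℝ^d` on `[0,T]`:
`X, Z ∈ D^p([0,T];ℝ^d)`, `𝕏 ∈ D^{p/2}_2(Δ_{[0,T]};ℝ^{d×d})`, and Chen's relation holds. -/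
structure IsRoughPath (d : ℕ) (p T : ℝ) (X Z : ℝ → Vec d) (XX : ℝ → ℝ → Mat d) : Prop where
  cadlagX : CadlagOn X 0 T
  cadlagZ : CadlagOn Z 0 T
  varX : HasBddPVar p (inc X) 0 T
  varZ : HasBddPVar p (inc Z) 0 T
  cadlagXX₁ : ∀ t ∈ Icc (0 : ℝ) T, CadlagOn (fun s => XX s t) 0 t
  cadlagXX₂ : ∀ s ∈ Icc (0 : ℝ) T, CadlagOn (fun t => XX s t) s T
  varXX : HasBddPVar (p / 2) XX 0 T
  chen : ∀ ⦃s u t : ℝ⦄, 0 ≤ s → s ≤ u → u ≤ t → t ≤ T →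
    XX s t = XX s u + XX u t + tensor (Z u - Z s) (X t - X u)

/-- The remainder `R^F_{s,t} := F_{s,t} - F'_s Z_{s,t}` of a controlled path. -/
def rem {d : ℕ} (Z F : ℝ → Vec d) (F' : ℝ → Mat d) : ℝ → ℝ → Vec d :=
  fun s t => F t - F s - matApply (F' s) (Z t - Z s)

/-- `(F, F')` is a controlled path in `𝒱^{q,r}_Z` on `[0,T]` (with `F ∈ D^p`):
`F ∈ D^p([0,T];ℝ^d)`, `F' ∈ D^q([0,T];L(ℝ^d,ℝ^d))` and `R^F ∈ D^r_2(Δ_{[0,T]};ℝ^d)`. -/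
structure IsControlledPath (d : ℕ) (p q r T : ℝ) (Z : ℝ → Vec d)
    (F : ℝ → Vec d) (F' : ℝ → Mat d) : Prop where
  cadlagF : CadlagOn F 0 T
  varF : HasBddPVar p (inc F) 0 T
  cadlagF' : CadlagOn F' 0 T
  varF' : HasBddPVar q (inc F') 0 T
  cadlagR₁ : ∀ t ∈ Icc (0 : ℝ) T, CadlagOn (fun s => rem Z F F' s t) 0 t
  cadlagR₂ : ∀ s ∈ Icc (0 : ℝ) T, CadlagOn (fun t => rem Z F F' s t) s T
  varR : HasBddPVar r (rem Z F F') 0 T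

/-- The controlled path norm `‖F,F'‖_{𝒱^{q,r}_Z,[0,T]} := |F'_0| + ‖F'‖_q + ‖R^F‖_r`. -/
def ctrlNorm {d : ℕ} (q r T : ℝ) (Z F : ℝ → Vec d) (F' : ℝ → Mat d) : ℝ :=
  ‖F' 0‖ + pVar q (inc F') 0 T + pVar r (rem Z F F') 0 T

/-- Compensated Riemann sum `Σ (⟨F_u, G_{u,v}⟩ + F'_u G'_u 𝕏_{u,v})` along a partition of `[0,t]`. -/
def compSum {d : ℕ} (F : ℝ → Vec d) (F' : ℝ → Mat d) (G : ℝ → Vec d) (G' : ℝ → Mat d)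
    (XX : ℝ → ℝ → Mat d) {t : ℝ} (P : IntervalPartition 0 t) : ℝ :=
  ∑ k ∈ Finset.range P.N,
    (⟪F (P.τ k), G (P.τ (k + 1)) - G (P.τ k)⟫_ℝ
      + ddContract (F' (P.τ k)) (G' (P.τ k)) (XX (P.τ k) (P.τ (k + 1))))

/-- `I` is the value at time `t` of the rough integral `∫₀ᵗ F dG`: the compensated Riemann
sums converge to `I` along every sequence of partitions of `[0,t]` with mesh tending to `0`. -/
def IsRoughIntegralAt {d : ℕ} (F : ℝ → Vec d) (F' : ℝ → Mat d) (G : ℝ → Vec d)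
    (G' : ℝ → Mat d) (XX : ℝ → ℝ → Mat d) (t : ℝ) (I : ℝ) : Prop :=
  ∀ ε > 0, ∃ δ > 0, ∀ P : IntervalPartition 0 t, P.MeshLt δ →
    |compSum F F' G G' XX P - I| < ε

/-- The rough path seminorm `‖X‖_{p,[0,T]} + ‖Z‖_{p,[0,T]} + ‖𝕏‖_{p/2,[0,T]}`. -/
def roughNorm {d : ℕ} (p T : ℝ) (X Z : ℝ → Vec d) (XX : ℝ → ℝ → Mat d) : ℝ :=
  pVar p (inc X) 0 T + pVar p (inc Z) 0 T + pVar (p / 2) XX 0 T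

/-- The rough path distance `‖X − X̃‖_p + ‖Z − Z̃‖_p + ‖𝕏 − 𝕏̃‖_{p/2}`. -/
def roughDist {d : ℕ} (p T : ℝ) (X Z X' Z' : ℝ → Vec d) (XX XX' : ℝ → ℝ → Mat d) : ℝ :=
  pVar p (inc (fun u => X u - X' u)) 0 T + pVar p (inc (fun u => Z u - Z' u)) 0 T
    + pVar (p / 2) (fun s t => XX s t - XX' s t) 0 T

/-- A nested sequence of partitions `P^n = {0 = t^n_0 < t^n_1 < ⋯ < t^n_{N_n} = T}` of `[0,T]`
with vanishing mesh size. -/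
structure PartitionSeq (T : ℝ) where
  N : ℕ → ℕ
  t : ℕ → ℕ → ℝ
  Npos : ∀ n, 0 < N n
  first : ∀ n, t n 0 = 0
  last : ∀ n, t n (N n) = T
  mono : ∀ n, ∀ k < N n, t n k < t n (k + 1)
  nested : ∀ n, ∀ k ≤ N n, ∃ l ≤ N (n + 1), t (n + 1) l = t n k
  mesh : ∀ ε > 0, ∃ M : ℕ, ∀ n ≥ M, ∀ k < N n, t n (k + 1) - t n k < ε

/-- The set `∪_{n ∈ ℕ} P^n` of all partition points. -/
def PartitionSeq.points {T : ℝ} (π : PartitionSeq T) : Set ℝ :=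
  {x | ∃ n, ∃ k ≤ π.N n, π.t n k = x}

/-- The left-point discretization
`S^n_u = S_T 1_{{T}}(u) + Σ_k S_{t^n_k} 1_{[t^n_k, t^n_{k+1})}(u)`. -/
def PartitionSeq.disc {T : ℝ} (π : PartitionSeq T) {E : Type*} [NormedAddCommGroup E]
    (S : ℝ → E) (n : ℕ) (u : ℝ) : E :=
  Set.indicator {T} S u
    + ∑ k ∈ Finset.range (π.N n),
        Set.indicator (Ico (π.t n k) (π.t n (k + 1))) (fun _ => S (π.t n k)) u

/-- The Riemann sum `∫₀ᵘ S^n ⊗ dS := Σ_k S_{t^n_k} ⊗ (S_{t^n_{k+1} ∧ u} - S_{t^n_k ∧ u})`. -/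
def riemannSum {d : ℕ} {T : ℝ} (π : PartitionSeq T) (S : ℝ → Vec d) (n : ℕ) (u : ℝ) : Mat d :=
  ∑ k ∈ Finset.range (π.N n),
    tensor (S (π.t n k)) (S (min (π.t n (k + 1)) u) - S (min (π.t n k) u))

/-- The Riemann sum `∫_{t^n_k}^{t^n_l} S^n ⊗ dS` between two partition points. -/
def riemannBetween {d : ℕ} {T : ℝ} (π : PartitionSeq T) (S : ℝ → Vec d) (n k l : ℕ) : Mat d :=
  ∑ j ∈ Finset.Ico k l, tensor (S (π.t n j)) (S (π.t n (j + 1)) - S (π.t n j))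

/-- Property (RIE) for `S` with respect to `p` and `(P^n)`, with Riemann-sum limit `II` and
control function `w`:  `S` is càdlàg, `S^n → S` uniformly, the Riemann sums `∫₀· S^n ⊗ dS`
converge uniformly to `II`, and `w` dominates `|S_{s,t}|^p` as well as
`|∫_{t^n_k}^{t^n_l} S^n ⊗ dS - S_{t^n_k} ⊗ S_{t^n_k,t^n_l}|^{p/2}`. -/
structure SatisfiesRIE (d : ℕ) (p T : ℝ) (π : PartitionSeq T) (S : ℝ → Vec d)
    (II : ℝ → Mat d) (w : ℝ → ℝ → ℝ) : Prop where
  cadlag : CadlagOn S 0 T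
  discUnif : TendstoUniformlyOn (fun n => π.disc S n) S atTop (Icc 0 T)
  riemannUnif : TendstoUniformlyOn (fun n => riemannSum π S n) II atTop (Icc 0 T)
  control : IsControl T w
  domS : ∀ ⦃s t : ℝ⦄, 0 ≤ s → s ≤ t → t ≤ T → ‖S t - S s‖ ^ p ≤ w s t
  domA : ∀ n : ℕ, ∀ ⦃k l : ℕ⦄, k < l → l ≤ π.N n →
    ‖riemannBetween π S n k l - tensor (S (π.t n k)) (S (π.t n l) - S (π.t n k))‖ ^ (p / 2)
      ≤ w (π.t n k) (π.t n l)

/-- The canonical second-level function `A_{s,t} := ∫ₛᵗ S ⊗ dS - S_s ⊗ S_{s,t}`,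
built from the limit `II = ∫₀· S ⊗ dS` of the Riemann sums in Property (RIE). -/
def roughA {d : ℕ} (S : ℝ → Vec d) (II : ℝ → Mat d) : ℝ → ℝ → Mat d :=
  fun s t => II t - II s - tensor (S s) (S t - S s)

/-!
`∫₀· S ⊗ dS` is the uniform limit of the Riemann sums, which are càdlàg, so it is càdlàg;
Chen's relation for `A` is pure algebra. Condition (c) passes to the limit at pairs of
partition points `u < v`, giving `|A_{u,v}| ≤ w(u,v)^{2/p}`. Right-continuity of `A` in its
first variable, together with monotonicity of `w` under shrinking intervals, frees the left
endpoint. For the right endpoint `t`, Chen's relation through a partition point `v ↑ t` gives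
`|A_{s,t}| ≤ w(s,v)^{2/p} + |A_{v,t}| + |S_{s,v}||S_{v,t}|`, where `A_{v,t} → 0`, whence
`|A_{s,t}| ≤ 2 w(s,t)^{2/p}`; superadditivity of `w` turns this into
`‖A‖_{p/2} ≤ 2 w(0,T)^{2/p}`.
-/

namespace CadlagOn

section

variable {E F G : Type*} [TopologicalSpace E] [TopologicalSpace F] [TopologicalSpace G]
  {a b : ℝ}

lemma mono {f : ℝ → E} (hf : CadlagOn f a b) {a' b' : ℝ} (ha : a ≤ a') (hb : b' ≤ b) :
    CadlagOn f a' b' :=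
  ⟨fun t ht => hf.1 t ⟨ha.trans ht.1, ht.2.trans_le hb⟩,
    fun t ht => hf.2 t ⟨ha.trans_lt ht.1, ht.2.trans hb⟩⟩

lemma const (c : E) : CadlagOn (fun _ => c) a b :=
  ⟨fun _ _ => tendsto_const_nhds, fun _ _ => ⟨c, tendsto_const_nhds⟩⟩

lemma comp₂ {f : ℝ → E} {g : ℝ → F} (hf : CadlagOn f a b) (hg : CadlagOn g a b)
    {Φ : E → F → G} (hΦ : Continuous (Function.uncurry Φ)) :
    CadlagOn (fun x => Φ (f x) (g x)) a b := by
  refine ⟨fun t ht => ?_, fun t ht => ?_⟩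
  · exact (hΦ.tendsto (f t, g t)).comp ((hf.1 t ht).prodMk_nhds (hg.1 t ht))
  · obtain ⟨l, hl⟩ := hf.2 t ht
    obtain ⟨m, hm⟩ := hg.2 t ht
    exact ⟨Φ l m, (hΦ.tendsto (l, m)).comp (hl.prodMk_nhds hm)⟩

lemma finset_sum [AddCommMonoid E] [ContinuousAdd E] {ι : Type*} (s : Finset ι)
    {f : ι → ℝ → E} (hf : ∀ i ∈ s, CadlagOn (f i) a b) :
    CadlagOn (fun x => ∑ i ∈ s, f i x) a b := by
  classical
  induction s using Finset.induction_on with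
  | empty => simpa using const (0 : E)
  | insert i s hi ih =>
    simp only [Finset.sum_insert hi]
    exact comp₂ (hf i (Finset.mem_insert_self i s))
      (ih fun j hj => hf j (Finset.mem_insert_of_mem hj)) continuous_add

lemma comp_min {f : ℝ → E} (hf : CadlagOn f a b) (c : ℝ) :
    CadlagOn (fun x => f (min c x)) a b := by
  refine ⟨fun t ht => ?_, fun t ht => ?_⟩
  · rcases lt_or_ge t c with htc | hct
    · have hmin : (fun x => f (min c x)) =ᶠ[𝓝[>] t] f := by
        filter_upwards [nhdsWithin_le_nhds (gt_mem_nhds htc)] with x hx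
        rw [min_eq_right hx.le]
      show Tendsto _ _ (𝓝 (f (min c t)))
      rw [min_eq_right htc.le]
      exact (hf.1 t ht).congr' hmin.symm
    · have hmin : (fun _ => f c) =ᶠ[𝓝[>] t] (fun x => f (min c x)) := by
        filter_upwards [self_mem_nhdsWithin] with x hx
        rw [min_eq_left (hct.trans hx.le)]
      show Tendsto _ _ (𝓝 (f (min c t)))
      rw [min_eq_left hct]
      exact tendsto_const_nhds.congr' hmin
  · rcases le_or_gt t c with htc | hct
    · obtain ⟨l, hl⟩ := hf.2 t ht
      refine ⟨l, hl.congr' ?_⟩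
      filter_upwards [self_mem_nhdsWithin] with x hx
      rw [min_eq_right (hx.trans_le htc).le]
    · refine ⟨f c, tendsto_const_nhds.congr' ?_⟩
      filter_upwards [nhdsWithin_le_nhds (lt_mem_nhds hct)] with x hx
      rw [min_eq_left hx.le]

end

lemma of_tendstoUniformlyOn {E : Type*} [MetricSpace E] [CompleteSpace E] {a b : ℝ}
    {F : ℕ → ℝ → E} {f : ℝ → E} (hF : ∀ n, CadlagOn (F n) a b)
    (hFf : TendstoUniformlyOn F f atTop (Icc a b)) :
    CadlagOn f a b := by
  refine ⟨fun t ht => ?_, fun t ht => ?_⟩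
  · have hunif : TendstoUniformlyOnFilter F f atTop (𝓝[Ioo t b] t) :=
      (hFf.mono (Ioo_subset_Icc_self.trans (Icc_subset_Icc_left ht.1))
        |>.tendstoUniformlyOnFilter).mono_right inf_le_right
    rw [← nhdsWithin_Ioo_eq_nhdsGT ht.2]
    exact hunif.tendsto_of_eventually_tendsto
      (Eventually.of_forall fun n => by rw [nhdsWithin_Ioo_eq_nhdsGT ht.2]; exact (hF n).1 t ht)
      (hFf.tendsto_at (Ico_subset_Icc_self ht))
  · -- Moore–Osgood: the left limits of the `F n` form a Cauchy sequence, whose limit is the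
    -- left limit of `f`.
    choose L hL using fun n => (hF n).2 t ht
    have hunif : TendstoUniformlyOnFilter F f atTop (𝓝[Ioo a t] t) :=
      (hFf.mono (Ioo_subset_Icc_self.trans (Icc_subset_Icc_right ht.2))
        |>.tendstoUniformlyOnFilter).mono_right inf_le_right
    rw [nhdsWithin_Ioo_eq_nhdsLT ht.1] at hunif
    have hL_cauchy : CauchySeq L := by
      refine Metric.cauchySeq_iff.2 fun ε hε => ?_
      obtain ⟨N, hN⟩ := Metric.uniformCauchySeqOn_iff.1 hFf.uniformCauchySeqOn (ε / 2)
        (half_pos hε)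
      refine ⟨N, fun m hm n hn => lt_of_le_of_lt ?_ (half_lt_self hε)⟩
      refine le_of_tendsto ((hL m).dist (hL n)) ?_
      filter_upwards [Ioo_mem_nhdsLT ht.1] with x hx
      exact (hN m hm n hn x ⟨hx.1.le, hx.2.le.trans ht.2⟩).le
    obtain ⟨l, hl⟩ := cauchySeq_tendsto_of_complete hL_cauchy
    exact ⟨l, hunif.tendsto_of_eventually_tendsto (Eventually.of_forall hL) hl⟩

end CadlagOn

section Tensor

variable {d : ℕ}

lemma tensor_sub_left (a b c : Vec d) : tensor (a - b) c = tensor a c - tensor b c := by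
  ext ij; simp [tensor, mkMat, sub_mul]

lemma tensor_sub_right (a b c : Vec d) : tensor a (b - c) = tensor a b - tensor a c := by
  ext ij; simp [tensor, mkMat, mul_sub]

lemma tensor_zero_right (a : Vec d) : tensor a 0 = 0 := by
  ext ij; simp [tensor, mkMat]

lemma norm_tensor (a b : Vec d) : ‖tensor a b‖ = ‖a‖ * ‖b‖ := by
  rw [EuclideanSpace.norm_eq, EuclideanSpace.norm_eq, EuclideanSpace.norm_eq,
    ← Real.sqrt_mul (by positivity), Finset.sum_mul_sum, Fintype.sum_prod_type]
  simp [tensor, mkMat, mul_pow]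

lemma continuous_tensor : Continuous (Function.uncurry (tensor (d := d))) := by
  change Continuous fun x : Vec d × Vec d =>
    WithLp.toLp 2 fun ij : Fin d × Fin d => x.1 ij.1 * x.2 ij.2
  fun_prop

@[fun_prop]
lemma Continuous.tensor {α : Type*} [TopologicalSpace α] {f g : α → Vec d} (hf : Continuous f)
    (hg : Continuous g) : Continuous fun x => tensor (f x) (g x) :=
  continuous_tensor.comp (hf.prodMk hg)

end Tensor

lemma exists_lt_not_and_succ {P : ℕ → Prop} {N : ℕ} (h0 : ¬P 0) (hN : P N) :
    ∃ j < N, ¬P j ∧ P (j + 1) := by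
  induction N with
  | zero => exact absurd hN h0
  | succ N ih =>
    by_cases hPN : P N
    · obtain ⟨j, hj, hPj⟩ := ih hPN
      exact ⟨j, by omega, hPj⟩
    · exact ⟨N, by omega, hPN, hN⟩

namespace IntervalPartition

variable {s t : ℝ} (P : IntervalPartition s t)

lemma strictMonoOn : StrictMonoOn P.τ (Iic P.N) :=
  strictMonoOn_Iic_of_lt_succ P.mono

lemma mem_Icc {k : ℕ} (hk : k ≤ P.N) : P.τ k ∈ Icc s t := by
  have h₀ := P.strictMonoOn.monotoneOn (Nat.zero_le _) hk (Nat.zero_le k)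
  have h₁ := P.strictMonoOn.monotoneOn hk (le_refl P.N) hk
  rw [P.first] at h₀
  rw [P.last] at h₁
  exact ⟨h₀, h₁⟩

end IntervalPartition

namespace PartitionSeq

variable {T : ℝ} (π : PartitionSeq T)

def partition (n : ℕ) : IntervalPartition 0 T :=
  ⟨π.N n, π.t n, π.Npos n, π.first n, π.last n, π.mono n⟩

lemma strictMonoOn (n : ℕ) : StrictMonoOn (π.t n) (Iic (π.N n)) :=
  (π.partition n).strictMonoOn

lemma t_mono {n i k : ℕ} (hik : i ≤ k) (hk : k ≤ π.N n) : π.t n i ≤ π.t n k :=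
  (π.strictMonoOn n).monotoneOn (hik.trans hk) hk hik

lemma t_mem_Icc {n k : ℕ} (hk : k ≤ π.N n) : π.t n k ∈ Icc 0 T :=
  (π.partition n).mem_Icc hk

lemma exists_index_of_le {n m : ℕ} (hnm : n ≤ m) {k : ℕ} (hk : k ≤ π.N n) :
    ∃ l ≤ π.N m, π.t m l = π.t n k := by
  induction m, hnm using Nat.le_induction with
  | base => exact ⟨k, hk, rfl⟩
  | succ m _ ih =>
    obtain ⟨l, hl, hlk⟩ := ih
    obtain ⟨l', hl', hl'l⟩ := π.nested m l hl
    exact ⟨l', hl', hl'l.trans hlk⟩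

lemma exists_cell_of_mem_Ico (n : ℕ) {a : ℝ} (ha : a ∈ Ico 0 T) :
    ∃ j < π.N n, π.t n j ≤ a ∧ a < π.t n (j + 1) := by
  obtain ⟨j, hj, hja, hj1⟩ := exists_lt_not_and_succ (P := fun k => a < π.t n k) (N := π.N n)
    (by simpa [π.first] using ha.1) (by simpa [π.last] using ha.2)
  exact ⟨j, hj, not_lt.1 hja, hj1⟩

lemma exists_cell_of_mem_Ioc (n : ℕ) {a : ℝ} (ha : a ∈ Ioc 0 T) :
    ∃ j < π.N n, π.t n j < a ∧ a ≤ π.t n (j + 1) := by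
  obtain ⟨j, hj, hja, hj1⟩ := exists_lt_not_and_succ (P := fun k => a ≤ π.t n k) (N := π.N n)
    (by simpa [π.first] using ha.1) (by simpa [π.last] using ha.2)
  exact ⟨j, hj, not_le.1 hja, hj1⟩

lemma exists_mem_points_Ioo {a b : ℝ} (ha : 0 ≤ a) (hab : a < b) (hb : b ≤ T) :
    ∃ x ∈ π.points, x ∈ Ioo a b := by
  obtain ⟨n, hn⟩ := π.mesh (b - a) (sub_pos.2 hab)
  obtain ⟨j, hj, hja, haj⟩ := π.exists_cell_of_mem_Ico n ⟨ha, hab.trans_le hb⟩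
  have := hn n le_rfl j hj
  exact ⟨π.t n (j + 1), ⟨n, j + 1, hj, rfl⟩, haj, by linarith⟩

end PartitionSeq

namespace IsControl

variable {T : ℝ} {w : ℝ → ℝ → ℝ}

lemma mono (hw : IsControl T w) {s a b t : ℝ} (hs : 0 ≤ s) (hsa : s ≤ a) (hab : a ≤ b)
    (hbt : b ≤ t) (ht : t ≤ T) : w a b ≤ w s t := by
  have h₁ := hw.2 hs hsa hab (hbt.trans ht)
  have h₂ := hw.2 hs (hsa.trans hab) hbt ht
  have h₃ := hw.1 hs hsa ((hab.trans hbt).trans ht)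
  have h₄ := hw.1 (hs.trans (hsa.trans hab)) hbt ht
  linarith

lemma rpow_mono (hw : IsControl T w) {r s a b t : ℝ} (hr : 0 ≤ r) (hs : 0 ≤ s) (hsa : s ≤ a)
    (hab : a ≤ b) (hbt : b ≤ t) (ht : t ≤ T) : w a b ^ r ≤ w s t ^ r :=
  Real.rpow_le_rpow (hw.1 (hs.trans hsa) hab (hbt.trans ht)) (hw.mono hs hsa hab hbt ht) hr

lemma sum_le (hw : IsControl T w) (P : IntervalPartition 0 T) :
    ∑ k ∈ Finset.range P.N, w (P.τ k) (P.τ (k + 1)) ≤ w 0 T := by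
  have key : ∀ j ≤ P.N, ∑ k ∈ Finset.range j, w (P.τ k) (P.τ (k + 1)) ≤ w (P.τ 0) (P.τ j) := by
    intro j
    induction j with
    | zero => simpa using hw.1 (P.mem_Icc P.Npos.le).1 le_rfl (P.mem_Icc P.Npos.le).2
    | succ j ih =>
      intro hj
      rw [Finset.sum_range_succ]
      have h0j := P.strictMonoOn.monotoneOn (Nat.zero_le _) (by omega : j ≤ P.N) (Nat.zero_le j)
      have := hw.2 (P.mem_Icc P.Npos.le).1 h0j (P.mono j hj).le (P.mem_Icc hj).2
      linarith [ih (by omega)]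
  simpa [P.first, P.last] using key P.N le_rfl

end IsControl

section Variation

variable {E : Type*} [NormedAddCommGroup E] {q C T : ℝ} {w : ℝ → ℝ → ℝ}
  {A : ℝ → ℝ → E}

lemma varSumOn_le_of_norm_le (hq : 0 < q) (hC : 0 ≤ C) (hw : IsControl T w)
    (hA : ∀ ⦃s t : ℝ⦄, 0 ≤ s → s < t → t ≤ T → ‖A s t‖ ≤ C * w s t ^ (1 / q))
    (P : IntervalPartition 0 T) : varSumOn q A P ≤ C ^ q * w 0 T := by
  have hterm : ∀ k < P.N, ‖A (P.τ k) (P.τ (k + 1))‖ ^ q ≤ C ^ q * w (P.τ k) (P.τ (k + 1)) := by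
    intro k hk
    have h₀ := (P.mem_Icc hk.le).1
    have h₁ := (P.mem_Icc hk).2
    have hw₀ := hw.1 h₀ (P.mono k hk).le h₁
    calc ‖A (P.τ k) (P.τ (k + 1))‖ ^ q
        ≤ (C * w (P.τ k) (P.τ (k + 1)) ^ (1 / q)) ^ q := by
          gcongr; exact hA h₀ (P.mono k hk) h₁
      _ = C ^ q * w (P.τ k) (P.τ (k + 1)) := by
          rw [Real.mul_rpow hC (by positivity), ← Real.rpow_mul hw₀, one_div_mul_cancel hq.ne',
            Real.rpow_one]
  calc varSumOn q A P
      ≤ ∑ k ∈ Finset.range P.N, C ^ q * w (P.τ k) (P.τ (k + 1)) :=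
        Finset.sum_le_sum fun k hk => hterm k (Finset.mem_range.1 hk)
    _ ≤ C ^ q * w 0 T := by
        rw [← Finset.mul_sum]
        gcongr
        exact hw.sum_le P

lemma hasBddPVar_of_norm_le (hq : 0 < q) (hC : 0 ≤ C) (hw : IsControl T w)
    (hA : ∀ ⦃s t : ℝ⦄, 0 ≤ s → s < t → t ≤ T → ‖A s t‖ ≤ C * w s t ^ (1 / q)) :
    HasBddPVar q A 0 T :=
  ⟨C ^ q * w 0 T, by rintro x ⟨P, rfl⟩; exact varSumOn_le_of_norm_le hq hC hw hA P⟩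

lemma pVar_le_of_norm_le (hq : 0 < q) (hC : 0 ≤ C) (hT : 0 ≤ T) (hw : IsControl T w)
    (hA : ∀ ⦃s t : ℝ⦄, 0 ≤ s → s < t → t ≤ T → ‖A s t‖ ≤ C * w s t ^ (1 / q)) :
    pVar q A 0 T ≤ C * w 0 T ^ (1 / q) := by
  have hw₀ : 0 ≤ w 0 T := hw.1 le_rfl hT le_rfl
  have hsup : sSup (pVarSums q A 0 T) ≤ C ^ q * w 0 T :=
    Real.sSup_le (by rintro x ⟨P, rfl⟩; exact varSumOn_le_of_norm_le hq hC hw hA P)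
      (by positivity)
  have hsup₀ : 0 ≤ sSup (pVarSums q A 0 T) :=
    Real.sSup_nonneg fun x ⟨P, hx⟩ =>
      hx ▸ Finset.sum_nonneg fun _ _ => Real.rpow_nonneg (norm_nonneg _) _
  calc pVar q A 0 T ≤ (C ^ q * w 0 T) ^ (1 / q) := by unfold pVar; gcongr
    _ = C * w 0 T ^ (1 / q) := by
      rw [Real.mul_rpow (by positivity) hw₀, ← Real.rpow_mul hC, mul_one_div_cancel hq.ne',
        Real.rpow_one]

end Variation

section RiemannSum

variable {d : ℕ} {T : ℝ} (π : PartitionSeq T) (S : ℝ → Vec d)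

lemma riemannSum_eq_riemannBetween {n l : ℕ} (hl : l ≤ π.N n) :
    riemannSum π S n (π.t n l) = riemannBetween π S n 0 l := by
  unfold riemannSum riemannBetween
  rw [← Finset.sum_range_add_sum_Ico _ hl, ← Finset.range_eq_Ico]
  have htail : ∑ k ∈ Finset.Ico l (π.N n),
      tensor (S (π.t n k)) (S (min (π.t n (k + 1)) (π.t n l)) - S (min (π.t n k) (π.t n l)))
        = 0 := by
    refine Finset.sum_eq_zero fun k hk => ?_
    obtain ⟨hlk, hkN⟩ := Finset.mem_Ico.1 hk
    rw [min_eq_right (π.t_mono (by omega) hkN), min_eq_right (π.t_mono hlk hkN.le), sub_self,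
      tensor_zero_right]
  rw [htail, add_zero]
  refine Finset.sum_congr rfl fun k hk => ?_
  have hk : k < l := Finset.mem_range.1 hk
  rw [min_eq_left (π.t_mono hk hl), min_eq_left (π.t_mono hk.le hl)]

lemma riemannSum_sub_riemannSum_eq_riemannBetween {n k l : ℕ} (hkl : k ≤ l) (hl : l ≤ π.N n) :
    riemannSum π S n (π.t n l) - riemannSum π S n (π.t n k) = riemannBetween π S n k l := by
  rw [riemannSum_eq_riemannBetween π S hl, riemannSum_eq_riemannBetween π S (hkl.trans hl),
    sub_eq_iff_eq_add', riemannBetween, riemannBetween, riemannBetween,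
    Finset.sum_Ico_consecutive _ (Nat.zero_le k) hkl]

lemma riemannSum_sub_riemannSum_of_cell {n j : ℕ} {u v : ℝ} (hj : j < π.N n)
    (hu : π.t n j ≤ u) (huv : u ≤ v) (hv : v ≤ π.t n (j + 1)) :
    riemannSum π S n v - riemannSum π S n u = tensor (S (π.t n j)) (S v - S u) := by
  unfold riemannSum
  rw [← Finset.sum_sub_distrib, Finset.sum_eq_single j]
  · rw [← tensor_sub_right, min_eq_right hv, min_eq_right (huv.trans hv),
      min_eq_left (hu.trans huv), min_eq_left hu, sub_sub_sub_cancel_right]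
  · intro k hk hkj
    have hk : k < π.N n := Finset.mem_range.1 hk
    rw [← tensor_sub_right]
    rcases lt_or_gt_of_ne hkj with hkj | hjk
    · have h₁ : π.t n (k + 1) ≤ u := (π.t_mono hkj hj.le).trans hu
      have h₀ : π.t n k ≤ u := (π.t_mono hkj.le hj.le).trans hu
      rw [min_eq_left (h₁.trans huv), min_eq_left h₁, min_eq_left (h₀.trans huv), min_eq_left h₀,
        sub_self, tensor_zero_right]
    · have h₀ : v ≤ π.t n k := hv.trans (π.t_mono hjk hk.le)
      have h₁ : v ≤ π.t n (k + 1) := h₀.trans (π.t_mono k.le_succ hk)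
      rw [min_eq_right h₁, min_eq_right (huv.trans h₁), min_eq_right h₀,
        min_eq_right (huv.trans h₀), sub_self, sub_self, sub_self, tensor_zero_right]
  · exact fun h => absurd (Finset.mem_range.2 hj) h

lemma CadlagOn.riemannSum {a b : ℝ} (hS : CadlagOn S a b) (n : ℕ) :
    CadlagOn (riemannSum π S n) a b :=
  CadlagOn.finset_sum _ fun _ _ =>
    (CadlagOn.const _).comp₂ ((hS.comp_min _).comp₂ (hS.comp_min _) continuous_sub)
      continuous_tensor

end RiemannSum

section RoughA

variable {d : ℕ} (S : ℝ → Vec d) (II : ℝ → Mat d)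

lemma roughA_chen (s u t : ℝ) :
    roughA S II s t = roughA S II s u + roughA S II u t + tensor (S u - S s) (S t - S u) := by
  simp only [roughA, tensor_sub_left, tensor_sub_right]
  abel

variable {S II} {a b : ℝ}

lemma cadlagOn_roughA_fst (hS : CadlagOn S a b) (hII : CadlagOn II a b) (t : ℝ) :
    CadlagOn (fun s => roughA S II s t) a b :=
  hII.comp₂ hS (Φ := fun x y => II t - x - tensor y (S t - y)) (by fun_prop)

lemma cadlagOn_roughA_snd (hS : CadlagOn S a b) (hII : CadlagOn II a b) (s : ℝ) :
    CadlagOn (fun t => roughA S II s t) a b :=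
  hII.comp₂ hS (Φ := fun x y => x - II s - tensor (S s) (y - S s)) (by fun_prop)

end RoughA

namespace SatisfiesRIE

variable {d : ℕ} {p T : ℝ} {π : PartitionSeq T} {S : ℝ → Vec d} {II : ℝ → Mat d}
  {w : ℝ → ℝ → ℝ}

lemma cadlagOn_II (H : SatisfiesRIE d p T π S II w) : CadlagOn II 0 T :=
  CadlagOn.of_tendstoUniformlyOn (fun n => H.cadlag.riemannSum π S n) H.riemannUnif

lemma norm_sub_le_rpow (H : SatisfiesRIE d p T π S II w) (hp : 0 < p) {s t : ℝ} (hs : 0 ≤ s)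
    (hst : s ≤ t) (ht : t ≤ T) : ‖S t - S s‖ ≤ w s t ^ (1 / p) := by
  rw [one_div, Real.le_rpow_inv_iff_of_pos (norm_nonneg _) (H.control.1 hs hst ht) hp]
  exact H.domS hs hst ht

lemma norm_roughA_le_of_mem_points (H : SatisfiesRIE d p T π S II w) (hp : 0 < p) {u v : ℝ}
    (hu : u ∈ π.points) (hv : v ∈ π.points) (huv : u < v) :
    ‖roughA S II u v‖ ≤ w u v ^ (2 / p) := by
  obtain ⟨n, k, hk, rfl⟩ := hu
  obtain ⟨n', k', hk', rfl⟩ := hv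
  have hlim : Tendsto (fun m => riemannSum π S m (π.t n' k') - riemannSum π S m (π.t n k)
      - tensor (S (π.t n k)) (S (π.t n' k') - S (π.t n k))) atTop
      (𝓝 (roughA S II (π.t n k) (π.t n' k'))) :=
    ((H.riemannUnif.tendsto_at (π.t_mem_Icc hk')).sub
      (H.riemannUnif.tendsto_at (π.t_mem_Icc hk))).sub tendsto_const_nhds
  refine le_of_tendsto hlim.norm (eventually_atTop.2 ⟨max n n', fun m hm => ?_⟩)
  obtain ⟨a, ha, hta⟩ := π.exists_index_of_le (le_of_max_le_left hm) hk
  obtain ⟨b, hb, htb⟩ := π.exists_index_of_le (le_of_max_le_right hm) hk'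
  rw [← hta, ← htb] at huv ⊢
  have hab : a < b := ((π.strictMonoOn m).lt_iff_lt ha hb).1 huv
  rw [riemannSum_sub_riemannSum_eq_riemannBetween π S hab.le hb, ← inv_div,
    Real.le_rpow_inv_iff_of_pos (norm_nonneg _)
      (H.control.1 (π.t_mem_Icc ha).1 huv.le (π.t_mem_Icc hb).2) (by positivity)]
  exact H.domA m hab hb

lemma norm_roughA_le_of_right_mem_points (H : SatisfiesRIE d p T π S II w) (hp : 0 < p)
    {s v : ℝ} (hs : 0 ≤ s) (hsv : s < v) (hv : v ∈ π.points) :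
    ‖roughA S II s v‖ ≤ w s v ^ (2 / p) := by
  obtain ⟨n, k, hk, rfl⟩ := hv
  have hvT := (π.t_mem_Icc hk).2
  have hcont : Tendsto (fun u => roughA S II u (π.t n k)) (𝓝[>] s)
      (𝓝 (roughA S II s (π.t n k))) :=
    (cadlagOn_roughA_fst H.cadlag H.cadlagOn_II _).1 s ⟨hs, hsv.trans_le hvT⟩
  refine le_of_tendsto_of_frequently hcont.norm ((nhdsGT_basis s).frequently_iff.2 ?_)
  intro b hb
  obtain ⟨u, hu, hsu, hub⟩ :=
    π.exists_mem_points_Ioo hs (lt_min hb hsv) ((min_le_right _ _).trans hvT)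
  refine ⟨u, ⟨hsu, hub.trans_le (min_le_left _ _)⟩, ?_⟩
  have huv : u < π.t n k := hub.trans_le (min_le_right _ _)
  refine (H.norm_roughA_le_of_mem_points hp hu ⟨n, k, hk, rfl⟩ huv).trans ?_
  exact H.control.rpow_mono (by positivity) hs hsu.le huv.le le_rfl hvT

/-- On the cell `(t^n_j, t]` the Riemann sum increments are explicit, so `roughA v t` is, up to
the uniform error, `(S_{t^n_j} - S_v) ⊗ S_{v,t}`; fine meshes bring `t^n_j` close to `t` from
the left, where `S` has a limit. -/
lemma tendsto_roughA_nhdsLT (H : SatisfiesRIE d p T π S II w) (hp : 0 < p) {t : ℝ}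
    (ht : t ∈ Ioc 0 T) : Tendsto (fun v => roughA S II v t) (𝓝[<] t) (𝓝 0) := by
  obtain ⟨Sl, hSl⟩ := H.cadlag.2 t ht
  set B := w 0 T ^ (1 / p)
  have hB : 0 ≤ B := Real.rpow_nonneg (H.control.1 le_rfl (ht.1.le.trans ht.2) le_rfl) _
  rw [Metric.tendsto_nhds]
  intro ε hε
  set η := ε / (4 * (B + 1))
  have hη : 0 < η := by positivity
  obtain ⟨a, hat, hSa⟩ := (nhdsLT_basis t).eventually_iff.1 (Metric.tendsto_nhds.1 hSl η hη)
  obtain ⟨n, herr, hmesh⟩ := ((Metric.tendstoUniformlyOn_iff.1 H.riemannUnif η hη).and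
    (eventually_atTop.2 (π.mesh (t - a) (sub_pos.2 hat)))).exists
  obtain ⟨j, hj, hjt, htj⟩ := π.exists_cell_of_mem_Ioc n ht
  have haj : a < π.t n j := by linarith [hmesh j hj]
  filter_upwards [Ioo_mem_nhdsLT hjt] with v hv
  have hv₀ : 0 ≤ v := (π.t_mem_Icc hj.le).1.trans hv.1.le
  have hA : roughA S II v t = (II t - riemannSum π S n t) - (II v - riemannSum π S n v)
      + tensor (S (π.t n j) - S v) (S t - S v) := by
    rw [roughA, tensor_sub_left, ← riemannSum_sub_riemannSum_of_cell π S hj hv.1.le hv.2.le htj]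
    abel
  have hSjv : ‖S (π.t n j) - S v‖ ≤ 2 * η := by
    have := dist_triangle_right (S (π.t n j)) (S v) Sl
    rw [dist_eq_norm] at this
    linarith [hSa ⟨haj, hjt⟩, hSa ⟨haj.trans hv.1, hv.2⟩]
  have hSvt : ‖S t - S v‖ ≤ B :=
    (H.norm_sub_le_rpow hp hv₀ hv.2.le ht.2).trans
      (H.control.rpow_mono (by positivity) le_rfl hv₀ hv.2.le ht.2 le_rfl)
  have hII : ∀ x ∈ Icc 0 T, ‖II x - riemannSum π S n x‖ ≤ η := fun x hx =>
    (dist_eq_norm (II x) _ ▸ herr x hx).le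
  rw [dist_zero_right, hA]
  calc ‖(II t - riemannSum π S n t) - (II v - riemannSum π S n v)
        + tensor (S (π.t n j) - S v) (S t - S v)‖
      ≤ ‖II t - riemannSum π S n t‖ + ‖II v - riemannSum π S n v‖
        + ‖S (π.t n j) - S v‖ * ‖S t - S v‖ := by
        rw [← norm_tensor]; exact (norm_add_le _ _).trans (by gcongr; exact norm_sub_le _ _)
    _ ≤ η + η + 2 * η * B := by
        gcongr
        · exact hII t ⟨ht.1.le, ht.2⟩
        · exact hII v ⟨hv₀, hv.2.le.trans ht.2⟩
    _ < ε := by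
        have : η * (4 * (B + 1)) = ε := div_mul_cancel₀ ε (by positivity)
        nlinarith

lemma norm_roughA_le (H : SatisfiesRIE d p T π S II w) (hp : 0 < p) {s t : ℝ} (hs : 0 ≤ s)
    (hst : s < t) (ht : t ≤ T) : ‖roughA S II s t‖ ≤ 2 * w s t ^ (2 / p) := by
  have hw₀ := H.control.1 hs hst.le ht
  have hlim : Tendsto (fun v => 2 * w s t ^ (2 / p) + ‖roughA S II v t‖) (𝓝[<] t)
      (𝓝 (2 * w s t ^ (2 / p))) := by
    simpa using tendsto_const_nhds.add (H.tendsto_roughA_nhdsLT hp ⟨hs.trans_lt hst, ht⟩).norm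
  refine ge_of_tendsto_of_frequently hlim ((nhdsLT_basis t).frequently_iff.2 fun a ha => ?_)
  obtain ⟨v, hv, hav, hvt⟩ :=
    π.exists_mem_points_Ioo (le_max_of_le_right hs) (max_lt ha hst) ht
  refine ⟨v, ⟨(le_max_left _ _).trans_lt hav, hvt⟩, ?_⟩
  have hsv : s < v := (le_max_right _ _).trans_lt hav
  have hv₀ : 0 ≤ v := hs.trans hsv.le
  have hAsv : ‖roughA S II s v‖ ≤ w s t ^ (2 / p) :=
    (H.norm_roughA_le_of_right_mem_points hp hs hsv hv).trans
      (H.control.rpow_mono (by positivity) hs le_rfl hsv.le hvt.le ht)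
  have hSsv : ‖S v - S s‖ ≤ w s t ^ (1 / p) :=
    (H.norm_sub_le_rpow hp hs hsv.le (hvt.le.trans ht)).trans
      (H.control.rpow_mono (by positivity) hs le_rfl hsv.le hvt.le ht)
  have hSvt : ‖S t - S v‖ ≤ w s t ^ (1 / p) :=
    (H.norm_sub_le_rpow hp hv₀ hvt.le ht).trans
      (H.control.rpow_mono (by positivity) hs hsv.le hvt.le le_rfl ht)
  have htensor : ‖tensor (S v - S s) (S t - S v)‖ ≤ w s t ^ (2 / p) := by
    rw [norm_tensor]
    calc ‖S v - S s‖ * ‖S t - S v‖ ≤ w s t ^ (1 / p) * w s t ^ (1 / p) := by gcongr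
      _ = w s t ^ (2 / p) := by
        rw [← Real.rpow_add' hw₀ (by positivity)]
        ring_nf
  rw [roughA_chen S II s v t]
  exact norm_add₃_le.trans (by linarith)

end SatisfiesRIE

theorem RIE_gives_rough_path_general
    (p : ℝ) (hp : 2 < p) :
    ∃ C : ℝ, 0 < C ∧
      ∀ (d : ℕ) (T : ℝ), 0 < T →
      ∀ (π : PartitionSeq T) (S : ℝ → Vec d) (II : ℝ → Mat d) (w : ℝ → ℝ → ℝ),
        SatisfiesRIE d p T π S II w →
        IsRoughPath d p T S S (roughA S II) ∧
        pVar (p / 2) (roughA S II) 0 T ≤ C * w 0 T ^ (2 / p) := by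
  refine ⟨2, two_pos, fun d T hT π S II w H => ?_⟩
  have hp₀ : 0 < p := by linarith
  have hS : ∀ ⦃s t : ℝ⦄, 0 ≤ s → s < t → t ≤ T → ‖inc S s t‖ ≤ 1 * w s t ^ (1 / p) :=
    fun s t hs hst ht => by rw [one_mul]; exact H.norm_sub_le_rpow hp₀ hs hst.le ht
  have hA : ∀ ⦃s t : ℝ⦄, 0 ≤ s → s < t → t ≤ T →
      ‖roughA S II s t‖ ≤ 2 * w s t ^ (1 / (p / 2)) := by
    simpa only [one_div_div] using fun s t => H.norm_roughA_le hp₀ (s := s) (t := t)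
  have hvarS := hasBddPVar_of_norm_le hp₀ zero_le_one H.control hS
  have hII := H.cadlagOn_II
  refine ⟨⟨H.cadlag, H.cadlag, hvarS, hvarS,
    fun t ht => (cadlagOn_roughA_fst H.cadlag hII t).mono le_rfl ht.2,
    fun s hs => (cadlagOn_roughA_snd H.cadlag hII s).mono hs.1 le_rfl,
    hasBddPVar_of_norm_le (by positivity) zero_le_two H.control hA,
    fun s u t _ _ _ _ => roughA_chen S II s u t⟩, ?_⟩
  simpa only [one_div_div] using pVar_le_of_norm_le (by positivity) zero_le_two hT.le H.control hA

/-- **The canonical rough path lift under Property (RIE)** (Lemma 2.?).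
If `S` satisfies Property (RIE) with respect to `p` and `(P^n)`, and
`A_{s,t} := ∫ₛᵗ S ⊗ dS − S_s ⊗ S_{s,t}`, then `S = (S, S, A)` is a càdlàg `p`-rough path
(Chen's relation holds and `A` is càdlàg in each variable), and
`‖A‖_{p/2,[0,T]} ≤ C w(0,T)^{2/p} < ∞` with a constant `C` depending only on `p`. -/
theorem RIE_gives_rough_path
    (p : ℝ) (hp : 2 < p) (hp' : p < 3) :
    ∃ C : ℝ, 0 < C ∧
      ∀ (d : ℕ) (T : ℝ), 0 < T →
      ∀ (π : PartitionSeq T) (S : ℝ → Vec d) (II : ℝ → Mat d) (w : ℝ → ℝ → ℝ),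
        SatisfiesRIE d p T π S II w →
        IsRoughPath d p T S S (roughA S II) ∧
        pVar (p / 2) (roughA S II) 0 T ≤ C * w 0 T ^ (2 / p) :=
  RIE_gives_rough_path_general p hp
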